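/- Let θ > 0 and let ψ_θ(t) = −log(1 − (1 − e^{−θ}) e^{−t})/θ for t ≥ 0 be the Frank generator. Then for every d ≥ 1 and every t > 0, the d-th derivative of ψ_θ satisfies (−1)^d ψ_θ^{(d)}(t) = (1/θ) · Li_{−(d−1)}((1 − e^{−θ}) e^{−t}), where Li_{−s}(z) = ∑_{k=1}^∞ k^s z^k for s ≥ 0 (with the convention k^0 = 1, so Li_0(z) = z/(1−z)), the series converging since 0 < (1 − e^{−θ}) e^{−t} < 1. -/

import Mathlib

/-!
With `x(s) = (1 - e^{-θ}) e^{-s}` we have `θ ψ_θ(s) = -log (1 - x(s))`, whose derivative is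
`-x/(1 - x) = -Li₀(x)`. Term-by-term differentiation of the power series gives
`x · (Li_{-m})'(x) = Li_{-(m+1)}(x)`, and since `x'(s) = -x(s)` each further derivative in `s`
turns `Li_{-m}(x(s))` into `-Li_{-(m+1)}(x(s))`. Hence `ψ_θ^{(m+1)} = (-1)^{m+1} Li_{-m}(x) / θ`
wherever `|x| < 1`, an open set containing every `t > 0`.
-/

open Real Set

/-- `Li_{-m}(x) = ∑_{k ≥ 1} k^m x^k`, meaningful for `|x| < 1` (elsewhere the `tsum` is `0`). -/
noncomputable def polylogNeg (m : ℕ) (x : ℝ) : ℝ :=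
  ∑' k : ℕ, ((k : ℝ) + 1) ^ m * x ^ (k + 1)

theorem summable_polylogNeg (m : ℕ) {x : ℝ} (hx : |x| < 1) :
    Summable (fun k : ℕ => ((k : ℝ) + 1) ^ m * x ^ (k + 1)) := by
  simpa using
    (summable_nat_add_iff 1).2 (summable_pow_mul_geometric_of_norm_lt_one m (r := x) hx)

theorem polylogNeg_zero {x : ℝ} (hx : |x| < 1) : polylogNeg 0 x = x / (1 - x) := by
  simp only [polylogNeg, pow_zero, one_mul, pow_succ', tsum_mul_left,
    tsum_geometric_of_abs_lt_one hx, div_eq_mul_inv]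

theorem hasDerivAt_polylogNeg (m : ℕ) {x : ℝ} (hx : |x| < 1) :
    HasDerivAt (polylogNeg m) (∑' k : ℕ, ((k : ℝ) + 1) ^ (m + 1) * x ^ k) x := by
  obtain ⟨r, hxr, hr⟩ := exists_between hx
  have hr0 : 0 < r := (abs_nonneg x).trans_lt hxr
  have hx_mem : x ∈ Metric.ball (0 : ℝ) r := by rwa [mem_ball_zero_iff, Real.norm_eq_abs]
  have hu : Summable (fun k : ℕ => ((k : ℝ) + 1) ^ (m + 1) * r ^ k) := by
    refine ((summable_polylogNeg (m + 1) (by rwa [abs_of_pos hr0])).div_const r).congr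
      fun k => ?_
    rw [mul_div_assoc, pow_succ r, mul_div_cancel_right₀ _ hr0.ne']
  refine hasDerivAt_tsum_of_isPreconnected
    (g := fun (k : ℕ) (y : ℝ) => ((k : ℝ) + 1) ^ m * y ^ (k + 1))
    (g' := fun (k : ℕ) (y : ℝ) => ((k : ℝ) + 1) ^ (m + 1) * y ^ k) hu
    Metric.isOpen_ball (convex_ball 0 r).isPreconnected (fun k y _ => ?_) (fun k y hy => ?_)
    hx_mem (summable_polylogNeg m hx) hx_mem
  · refine ((hasDerivAt_pow (k + 1) y).const_mul _).congr_deriv ?_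
    rw [Nat.add_sub_cancel]
    push_cast
    ring
  · rw [mem_ball_zero_iff, Real.norm_eq_abs] at hy
    rw [norm_mul, norm_pow, norm_pow, Real.norm_eq_abs, Real.norm_eq_abs,
      abs_of_nonneg (by positivity : (0 : ℝ) ≤ (k : ℝ) + 1)]
    gcongr

theorem hasDerivAt_polylogNeg_mul_exp_neg (m : ℕ) (a : ℝ) {s : ℝ} (hs : |a * exp (-s)| < 1) :
    HasDerivAt (fun s => polylogNeg m (a * exp (-s))) (-polylogNeg (m + 1) (a * exp (-s))) s := by
  have hx : HasDerivAt (fun s => a * exp (-s)) (-(a * exp (-s))) s := by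
    simpa using (hasDerivAt_neg s).exp.const_mul a
  refine ((hasDerivAt_polylogNeg m hs).comp s hx).congr_deriv ?_
  simp only [polylogNeg, mul_neg, ← tsum_mul_right, mul_assoc, ← pow_succ]

theorem hasDerivAt_neg_log_one_sub_mul_exp_neg (a : ℝ) {s : ℝ} (hs : |a * exp (-s)| < 1) :
    HasDerivAt (fun s => -log (1 - a * exp (-s))) (-polylogNeg 0 (a * exp (-s))) s := by
  have hx : HasDerivAt (fun s => 1 - a * exp (-s)) (a * exp (-s)) s := by
    simpa using ((hasDerivAt_neg s).exp.const_mul a).const_sub 1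
  have hne : 1 - a * exp (-s) ≠ 0 := by linarith [le_abs_self (a * exp (-s))]
  rw [polylogNeg_zero hs]
  exact (hx.log hne).neg

theorem eqOn_iteratedDeriv_succ_of_hasDerivAt {𝕜 F : Type*} [NontriviallyNormedField 𝕜]
    [NormedAddCommGroup F] [NormedSpace 𝕜 F] {f : 𝕜 → F} {g : ℕ → 𝕜 → F} {U : Set 𝕜}
    (hU : IsOpen U) (hf : ∀ s ∈ U, HasDerivAt f (g 0 s) s)
    (hg : ∀ n, ∀ s ∈ U, HasDerivAt (g n) (g (n + 1) s) s) (n : ℕ) :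
    EqOn (iteratedDeriv (n + 1) f) (g n) U := by
  induction n with
  | zero => intro s hs; rw [iteratedDeriv_one, (hf s hs).deriv]
  | succ n ih =>
    intro s hs
    rw [iteratedDeriv_succ, (ih.eventuallyEq_of_mem (hU.mem_nhds hs)).deriv_eq, (hg n s hs).deriv]

/-- Derivatives of the Frank generator `ψ_θ(t) = −log(1−(1−e^{−θ})e^{−t})/θ`:
`(−1)^d ψ_θ^{(d)}(t) = (1/θ) Li_{−(d−1)}((1−e^{−θ})e^{−t})`, with
`Li_{−s}(z) = ∑_{k=1}^∞ k^s z^k` convergent. -/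
theorem stmt_12 (θ : ℝ) (hθ : 0 < θ) (d : ℕ) (hd : 1 ≤ d) (t : ℝ) (ht : 0 < t) :
    Summable (fun k : ℕ =>
      ((k : ℝ) + 1) ^ (d - 1) * ((1 - Real.exp (-θ)) * Real.exp (-t)) ^ (k + 1)) ∧
    (-1 : ℝ) ^ d *
        iteratedDeriv d
          (fun s => -Real.log (1 - (1 - Real.exp (-θ)) * Real.exp (-s)) / θ) t
      = (1/θ) *
          ∑' k : ℕ,
            ((k : ℝ) + 1) ^ (d - 1) *
              ((1 - Real.exp (-θ)) * Real.exp (-t)) ^ (k + 1) := by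
  set a := 1 - exp (-θ)
  set U := {s : ℝ | |a * exp (-s)| < 1}
  have htU : t ∈ U := by
    have ha : 0 < a := sub_pos.2 (exp_lt_one_iff.2 (neg_lt_zero.2 hθ))
    show |a * exp (-t)| < 1
    rw [abs_of_pos (by positivity)]
    nlinarith [exp_lt_one_iff.2 (neg_lt_zero.2 ht), exp_pos (-θ), exp_pos (-t)]
  obtain ⟨m, rfl⟩ := Nat.exists_eq_add_of_le' hd
  have hderiv := eqOn_iteratedDeriv_succ_of_hasDerivAt
    (U := U) (g := fun n s => (-1) ^ (n + 1) * polylogNeg n (a * exp (-s)) / θ)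
    (isOpen_lt (by fun_prop) continuous_const)
    (fun s hs => by simpa using (hasDerivAt_neg_log_one_sub_mul_exp_neg a hs).div_const θ)
    (fun n s hs => ((((hasDerivAt_polylogNeg_mul_exp_neg n a hs).const_mul
      ((-1) ^ (n + 1))).div_const θ).congr_deriv (by ring)))
    m htU
  refine ⟨summable_polylogNeg m htU, ?_⟩
  rw [Nat.add_sub_cancel, hderiv, ← polylogNeg]
  field_simp
  rw [← pow_mul, Even.neg_one_pow ⟨m + 1, by ring⟩, one_mul]
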